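/- Let d ≥ 1 be an integer, 0 < α < d, and let f be the Bessel kernel of order α on ℝ^d. Then there is a constant D_{α,d} > 0, depending only on α and d, such that for all u, v > 0 and all y, z ∈ ℝ^d: J_f(u,v,y,z) = ∫_{ℝ^d}∫_{ℝ^d} p_u(x−y) p_v(x'−z) f(x−x') dx dx' ≤ D_{α,d} (u+v)^{−(d−α)/2}. -/

import Mathlib

open MeasureTheory

/-- The heat kernel `p_t(x) = (2πt)^{-d/2} exp(-|x|²/(2t))` on `ℝ^d`. -/
noncomputable def heatKernel (d : ℕ) (t : ℝ) (x : EuclideanSpace ℝ (Fin d)) : ℝ :=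
  (2 * Real.pi * t) ^ (-(d : ℝ) / 2) * Real.exp (-‖x‖ ^ 2 / (2 * t))

/-- The Bessel kernel of order `α`:
`f(x) = γ'_α ∫₀^∞ w^{(α-d)/2-1} e^{-w} e^{-|x|²/(4w)} dw`, `γ'_α = (4π)^{α/2} Γ(α/2)`. -/
noncomputable def besselKernel (d : ℕ) (α : ℝ) (x : EuclideanSpace ℝ (Fin d)) : ℝ :=
  ((4 * Real.pi) ^ (α / 2) * Real.Gamma (α / 2)) *
    ∫ w in Set.Ioi (0 : ℝ),
      w ^ ((α - (d : ℝ)) / 2 - 1) * Real.exp (-w) * Real.exp (-‖x‖ ^ 2 / (4 * w))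

/-- `J_f(u,v,y,z) = ∫∫ p_u(x-y) p_v(x'-z) f(x-x') dx dx'` (as a Lebesgue integral in `[0,∞]`). -/
noncomputable def Jf (d : ℕ) (f : EuclideanSpace ℝ (Fin d) → ℝ) (u v : ℝ)
    (y z : EuclideanSpace ℝ (Fin d)) : ENNReal :=
  ∫⁻ x, ∫⁻ x', ENNReal.ofReal (heatKernel d u (x - y) * heatKernel d v (x' - z) * f (x - x'))

/-!
Write the Bessel kernel as a superposition of Gaussians, `f(x) = ∫₀^∞ c(w) e^{-|x|²/(4w)} dw`
with `c(w) = γ'_α w^{(α-d)/2-1} e^{-w}`, and exchange the integrals (Tonelli). For a Gaussian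
kernel the double heat integral is at most `1` (the kernel is `≤ 1` and the heat kernels are
probability densities) and at most `(4w/(u+v))^{d/2}` (bound the heat kernel of the larger time
by its maximum `(2π max(u,v))^{-d/2}`, then integrate the Gaussian). After dropping `e^{-w}`, the
integral `∫₀^∞ w^{(α-d)/2-1} min(1, (4w/(u+v))^{d/2}) dw` converges at `0` because `α > 0` and at
`∞` because `α < d`, and by scaling it is a constant times `(u+v)^{-(d-α)/2}`.
-/

open Real Set

theorem lintegral_exp_neg_norm_sq_div {d : ℕ} {b : ℝ} (hb : 0 < b) :
    ∫⁻ x : EuclideanSpace ℝ (Fin d), ENNReal.ofReal (exp (-‖x‖ ^ 2 / b)) =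
      ENNReal.ofReal ((π * b) ^ ((d : ℝ) / 2)) := by
  have hform : ∀ x : EuclideanSpace ℝ (Fin d), -‖x‖ ^ 2 / b = -b⁻¹ * ‖x‖ ^ 2 := fun x => by
    field_simp
  have hval :
      ∫ x : EuclideanSpace ℝ (Fin d), exp (-b⁻¹ * ‖x‖ ^ 2) = (π * b) ^ ((d : ℝ) / 2) := by
    rw [GaussianFourier.integral_rexp_neg_mul_sq_norm (inv_pos.2 hb), finrank_euclideanSpace_fin,
      div_inv_eq_mul]
  have hint : Integrable fun x : EuclideanSpace ℝ (Fin d) => exp (-b⁻¹ * ‖x‖ ^ 2) :=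
    .of_integral_ne_zero (by rw [hval]; positivity)
  simp_rw [hform]
  rw [← ofReal_integral_eq_lintegral_ofReal hint (.of_forall fun x => (exp_pos _).le), hval]

section HeatKernel

variable {d : ℕ} {t : ℝ}

theorem heatKernel_nonneg (ht : 0 < t) (x : EuclideanSpace ℝ (Fin d)) :
    0 ≤ heatKernel d t x := by
  unfold heatKernel; positivity

theorem heatKernel_le (ht : 0 < t) (x : EuclideanSpace ℝ (Fin d)) :
    heatKernel d t x ≤ (2 * π * t) ^ (-(d : ℝ) / 2) := by
  refine mul_le_of_le_one_right (by positivity) (exp_le_one_iff.2 ?_)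
  rw [neg_div]
  exact neg_nonpos.2 (by positivity)

@[fun_prop]
theorem measurable_heatKernel (t : ℝ) : Measurable (heatKernel d t) := by
  unfold heatKernel; fun_prop

theorem lintegral_heatKernel_sub (ht : 0 < t) (y : EuclideanSpace ℝ (Fin d)) :
    ∫⁻ x, ENNReal.ofReal (heatKernel d t (x - y)) = 1 := by
  rw [lintegral_sub_right_eq_self (fun x => ENNReal.ofReal (heatKernel d t x)) y]
  unfold heatKernel
  simp_rw [ENNReal.ofReal_mul (by positivity : (0 : ℝ) ≤ (2 * π * t) ^ (-(d : ℝ) / 2))]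
  rw [lintegral_const_mul' _ _ ENNReal.ofReal_ne_top, lintegral_exp_neg_norm_sq_div (by positivity),
    ← ENNReal.ofReal_mul (by positivity), show π * (2 * t) = 2 * π * t by ring,
    ← rpow_add (by positivity), neg_div, neg_add_cancel, rpow_zero, ENNReal.ofReal_one]

end HeatKernel

section Jf

variable {d : ℕ} {f g : EuclideanSpace ℝ (Fin d) → ℝ} {u v w : ℝ}
  {y z : EuclideanSpace ℝ (Fin d)}

theorem Jf_mono (hu : 0 < u) (hv : 0 < v) (hfg : ∀ x, f x ≤ g x) :
    Jf d f u v y z ≤ Jf d g u v y z :=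
  lintegral_mono fun _ => lintegral_mono fun _ => ENNReal.ofReal_le_ofReal <|
    mul_le_mul_of_nonneg_left (hfg _) (mul_nonneg (heatKernel_nonneg hu _) (heatKernel_nonneg hv _))

theorem Jf_const (hu : 0 < u) (hv : 0 < v) (c : ℝ) :
    Jf d (fun _ => c) u v y z = ENNReal.ofReal c := by
  unfold Jf
  simp_rw [ENNReal.ofReal_mul (mul_nonneg (heatKernel_nonneg hu _) (heatKernel_nonneg hv _)),
    ENNReal.ofReal_mul (heatKernel_nonneg hu _), mul_assoc,
    lintegral_const_mul' _ _ ENNReal.ofReal_ne_top, lintegral_mul_const' _ _ ENNReal.ofReal_ne_top,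
    lintegral_heatKernel_sub hv, one_mul, lintegral_mul_const' _ _ ENNReal.ofReal_ne_top,
    lintegral_heatKernel_sub hu, one_mul]

theorem Jf_const_mul {c : ℝ} (hc : 0 ≤ c) :
    Jf d (fun x => c * f x) u v y z = ENNReal.ofReal c * Jf d f u v y z := by
  unfold Jf
  rw [← lintegral_const_mul' _ _ ENNReal.ofReal_ne_top]
  refine lintegral_congr fun x => ?_
  rw [← lintegral_const_mul' _ _ ENNReal.ofReal_ne_top]
  refine lintegral_congr fun x' => ?_
  rw [← ENNReal.ofReal_mul hc]
  ring_nf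

theorem Jf_comm (hf : Measurable f) : Jf d f u v y z = Jf d (fun x => f (-x)) v u z y := by
  unfold Jf
  rw [lintegral_lintegral_swap (by fun_prop)]
  refine lintegral_congr fun x' => lintegral_congr fun x => ?_
  simp only [neg_sub, mul_comm (heatKernel d u _)]

theorem Jf_le_mul_lintegral (hu : 0 < u) (hv : 0 < v) :
    Jf d f u v y z ≤
      ENNReal.ofReal ((2 * π * v) ^ (-(d : ℝ) / 2)) * ∫⁻ x, ENNReal.ofReal (f x) := by
  set C := ENNReal.ofReal ((2 * π * v) ^ (-(d : ℝ) / 2))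
  have hpoint : ∀ x x',
      ENNReal.ofReal (heatKernel d u (x - y) * heatKernel d v (x' - z) * f (x - x')) ≤
        ENNReal.ofReal (heatKernel d u (x - y)) * (C * ENNReal.ofReal (f (x - x'))) :=
    fun x x' => by
    rw [ENNReal.ofReal_mul (mul_nonneg (heatKernel_nonneg hu _) (heatKernel_nonneg hv _)),
      ENNReal.ofReal_mul (heatKernel_nonneg hu _), mul_assoc]
    gcongr
    exact ENNReal.ofReal_le_ofReal (heatKernel_le hv _)
  calc Jf d f u v y z
      ≤ ∫⁻ x, ENNReal.ofReal (heatKernel d u (x - y)) *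
          (C * ∫⁻ x', ENNReal.ofReal (f (x - x'))) := by
        refine lintegral_mono fun x => ?_
        rw [← lintegral_const_mul' C _ ENNReal.ofReal_ne_top,
          ← lintegral_const_mul' _ _ ENNReal.ofReal_ne_top]
        exact lintegral_mono (hpoint x)
    _ = C * ∫⁻ x, ENNReal.ofReal (f x) := by
        simp_rw [lintegral_sub_left_eq_self (fun t => ENNReal.ofReal (f t)) _]
        rw [lintegral_mul_const _ (by fun_prop), lintegral_heatKernel_sub hu, one_mul]

theorem Jf_le_lintegral {W : Type*} [MeasurableSpace W] (μ : Measure W) [SFinite μ]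
    {k : W → EuclideanSpace ℝ (Fin d) → ℝ} (hu : 0 < u) (hv : 0 < v)
    (hk : Measurable (Function.uncurry k))
    (hfk : ∀ x, ENNReal.ofReal (f x) ≤ ∫⁻ w, ENNReal.ofReal (k w x) ∂μ) :
    Jf d f u v y z ≤ ∫⁻ w, Jf d (k w) u v y z ∂μ := by
  set F : EuclideanSpace ℝ (Fin d) → EuclideanSpace ℝ (Fin d) → W → ENNReal := fun x x' w =>
    ENNReal.ofReal (heatKernel d u (x - y) * heatKernel d v (x' - z) * k w (x - x'))
  have hF : Measurable fun q : (EuclideanSpace ℝ (Fin d) × W) × EuclideanSpace ℝ (Fin d) =>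
      F q.1.1 q.2 q.1.2 := by
    have hkq : Measurable fun q : (EuclideanSpace ℝ (Fin d) × W) × EuclideanSpace ℝ (Fin d) =>
        k q.1.2 (q.1.1 - q.2) :=
      hk.comp (measurable_fst.snd.prodMk (measurable_fst.fst.sub measurable_snd))
    simp only [F]
    fun_prop
  have hpoint : ∀ x x',
      ENNReal.ofReal (heatKernel d u (x - y) * heatKernel d v (x' - z) * f (x - x')) ≤
        ∫⁻ w, F x x' w ∂μ := fun x x' => by
    have hP := mul_nonneg (heatKernel_nonneg hu (x - y)) (heatKernel_nonneg hv (x' - z))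
    simp only [F, ENNReal.ofReal_mul hP]
    rw [lintegral_const_mul' _ _ ENNReal.ofReal_ne_top]
    gcongr
    exact hfk _
  calc Jf d f u v y z ≤ ∫⁻ x, ∫⁻ x', (∫⁻ w, F x x' w ∂μ) :=
        lintegral_mono fun x => lintegral_mono fun x' => hpoint x x'
    _ = ∫⁻ x, ∫⁻ w, (∫⁻ x', F x x' w) ∂μ := lintegral_congr fun x =>
        lintegral_lintegral_swap (f := fun x' w => F x x' w)
          (hF.comp ((measurable_const.prodMk measurable_snd).prodMk measurable_fst)).aemeasurable
    _ = ∫⁻ w, Jf d (k w) u v y z ∂μ :=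
        lintegral_lintegral_swap hF.lintegral_prod_right'.aemeasurable

theorem Jf_gaussian_le_of_le (hu : 0 < u) (hv : 0 < v) (hw : 0 < w) (huv : u ≤ v) :
    Jf d (fun x => exp (-‖x‖ ^ 2 / (4 * w))) u v y z ≤
      ENNReal.ofReal ((w / ((u + v) / 4)) ^ ((d : ℝ) / 2)) :=
  calc Jf d (fun x => exp (-‖x‖ ^ 2 / (4 * w))) u v y z
      ≤ ENNReal.ofReal ((2 * π * v) ^ (-(d : ℝ) / 2)) *
          ENNReal.ofReal ((π * (4 * w)) ^ ((d : ℝ) / 2)) := by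
        rw [← lintegral_exp_neg_norm_sq_div (by positivity)]
        exact Jf_le_mul_lintegral hu hv
    _ = ENNReal.ofReal ((2 * w / v) ^ ((d : ℝ) / 2)) := by
        rw [← ENNReal.ofReal_mul (by positivity), neg_div, rpow_neg (by positivity), inv_mul_eq_div,
          ← div_rpow (by positivity) (by positivity)]
        congr 2
        field_simp
        ring
    _ ≤ ENNReal.ofReal ((w / ((u + v) / 4)) ^ ((d : ℝ) / 2)) := by
        gcongr ENNReal.ofReal (?_ ^ _)
        rw [div_le_div_iff₀ hv (by positivity)]
        nlinarith

theorem Jf_gaussian_le (hu : 0 < u) (hv : 0 < v) (hw : 0 < w) :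
    Jf d (fun x => exp (-‖x‖ ^ 2 / (4 * w))) u v y z ≤
      ENNReal.ofReal (min 1 ((w / ((u + v) / 4)) ^ ((d : ℝ) / 2))) := by
  rw [ENNReal.ofReal_min, ← Jf_const hu hv (y := y) (z := z) 1]
  refine le_min (Jf_mono hu hv fun x => exp_le_one_iff.2 ?_) ?_
  · rw [neg_div]
    exact neg_nonpos.2 (by positivity)
  rcases le_total u v with huv | hvu
  · exact Jf_gaussian_le_of_le hu hv hw huv
  · rw [Jf_comm (by fun_prop), add_comm u]
    simpa only [norm_neg] using Jf_gaussian_le_of_le hv hu hw hvu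

end Jf

theorem lintegral_rpow_mul_min_one_rpow {s r a : ℝ} (hs : 0 < s) (hsr : s < r) (ha : 0 < a) :
    ∫⁻ w in Ioi 0, ENNReal.ofReal (w ^ (s - r - 1) * min 1 ((w / a) ^ r)) =
      ENNReal.ofReal (a ^ (s - r) * (1 / s + 1 / (r - s))) := by
  have hr : 0 < r := hs.trans hsr
  have hsmall : ∫⁻ w in Ioc 0 a, ENNReal.ofReal (w ^ (s - r - 1) * min 1 ((w / a) ^ r)) =
      ENNReal.ofReal (a ^ (s - r) / s) := by
    have hpow : ∀ w ∈ Ioc 0 a, w ^ (s - r - 1) * min 1 ((w / a) ^ r) = w ^ (s - 1) / a ^ r :=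
      fun w ⟨hw, hwa⟩ => by
        rw [min_eq_right (rpow_le_one (by positivity) ((div_le_one ha).2 hwa) hr.le),
          div_rpow hw.le ha.le, mul_div_assoc', ← rpow_add hw]
        ring_nf
    have hint : IntegrableOn (fun w : ℝ => w ^ (s - 1) / a ^ r) (Ioc 0 a) := by
      have h := (intervalIntegral.intervalIntegrable_rpow' (a := 0) (b := a)
        (by linarith : -1 < s - 1)).div_const (a ^ r)
      rwa [intervalIntegrable_iff_integrableOn_Ioc_of_le ha.le] at h
    rw [setLIntegral_congr_fun measurableSet_Ioc (fun w hw => by rw [hpow w hw]),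
      ← ofReal_integral_eq_lintegral_ofReal hint
        ((ae_restrict_mem measurableSet_Ioc).mono fun w hw => by have := hw.1; positivity),
      integral_div, ← intervalIntegral.integral_of_le ha.le, integral_rpow (Or.inl (by linarith)),
      sub_add_cancel, zero_rpow hs.ne', sub_zero, rpow_sub ha]
    ring_nf
  have hlarge : ∫⁻ w in Ioi a, ENNReal.ofReal (w ^ (s - r - 1) * min 1 ((w / a) ^ r)) =
      ENNReal.ofReal (a ^ (s - r) / (r - s)) := by
    have hβ : s - r - 1 < -1 := by linarith
    have hone : ∀ w ∈ Ioi a, w ^ (s - r - 1) * min 1 ((w / a) ^ r) = w ^ (s - r - 1) :=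
      fun w hw => by
        rw [min_eq_left (one_le_rpow ((one_le_div ha).2 (le_of_lt hw)) hr.le), mul_one]
    rw [setLIntegral_congr_fun measurableSet_Ioi (fun w hw => by rw [hone w hw]),
      ← ofReal_integral_eq_lintegral_ofReal (integrableOn_Ioi_rpow_of_lt hβ ha)
        ((ae_restrict_mem measurableSet_Ioi).mono fun w hw => rpow_nonneg (ha.trans hw).le _),
      integral_Ioi_rpow_of_lt hβ ha, sub_add_cancel, neg_div, ← div_neg, neg_sub]
  rw [← Ioc_union_Ioi_eq_Ioi ha.le, lintegral_union measurableSet_Ioi Ioc_disjoint_Ioi_same,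
    hsmall, hlarge,
    ← ENNReal.ofReal_add (by positivity) (div_nonneg (by positivity) (by linarith))]
  ring_nf

theorem ofReal_besselKernel_le {d : ℕ} {α : ℝ} (hα : 0 < α) (x : EuclideanSpace ℝ (Fin d)) :
    ENNReal.ofReal (besselKernel d α x) ≤ ∫⁻ w in Ioi 0, ENNReal.ofReal
      ((4 * π) ^ (α / 2) * Gamma (α / 2) * (w ^ ((α - d) / 2 - 1) * exp (-w)) *
        exp (-‖x‖ ^ 2 / (4 * w))) := by
  have hγ : 0 < (4 * π) ^ (α / 2) * Gamma (α / 2) := by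
    have := Gamma_pos_of_pos (half_pos hα); positivity
  unfold besselKernel
  rw [← integral_const_mul]
  calc ENNReal.ofReal (∫ w in Ioi 0, (4 * π) ^ (α / 2) * Gamma (α / 2) *
        (w ^ ((α - d) / 2 - 1) * exp (-w) * exp (-‖x‖ ^ 2 / (4 * w))))
      ≤ ‖∫ w in Ioi 0, (4 * π) ^ (α / 2) * Gamma (α / 2) *
        (w ^ ((α - d) / 2 - 1) * exp (-w) * exp (-‖x‖ ^ 2 / (4 * w)))‖ₑ :=
        ENNReal.ofReal_le_of_le_toReal (by simpa using le_abs_self _)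
    _ ≤ _ := enorm_integral_le_lintegral_enorm _
    _ = _ := setLIntegral_congr_fun measurableSet_Ioi fun w (hw : 0 < w) => by
        rw [Real.enorm_of_nonneg (by positivity), ← mul_assoc]

theorem Jf_besselKernel_le {d : ℕ} {α u v : ℝ} (hα : 0 < α) (hu : 0 < u) (hv : 0 < v)
    (y z : EuclideanSpace ℝ (Fin d)) :
    Jf d (besselKernel d α) u v y z ≤ ENNReal.ofReal ((4 * π) ^ (α / 2) * Gamma (α / 2)) *
      ∫⁻ w in Ioi 0, ENNReal.ofReal
        (w ^ (α / 2 - d / 2 - 1) * min 1 ((w / ((u + v) / 4)) ^ ((d : ℝ) / 2))) := by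
  set γ := (4 * π) ^ (α / 2) * Gamma (α / 2)
  have hγ : 0 < γ := by
    have := Gamma_pos_of_pos (half_pos hα); positivity
  have hmeas : Measurable (Function.uncurry fun (w : ℝ) (x : EuclideanSpace ℝ (Fin d)) =>
      γ * (w ^ ((α - d) / 2 - 1) * exp (-w)) * exp (-‖x‖ ^ 2 / (4 * w))) := by
    unfold Function.uncurry; fun_prop
  rw [← lintegral_const_mul' _ _ ENNReal.ofReal_ne_top]
  refine (Jf_le_lintegral _ hu hv hmeas (ofReal_besselKernel_le hα)).trans <|
    setLIntegral_mono' measurableSet_Ioi fun w (hw : 0 < w) => ?_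
  rw [Jf_const_mul (by positivity), ENNReal.ofReal_mul hγ.le, mul_assoc,
    ENNReal.ofReal_mul (by positivity : (0 : ℝ) ≤ w ^ (α / 2 - d / 2 - 1)),
    show (α - d) / 2 - 1 = α / 2 - d / 2 - 1 by ring]
  gcongr
  · exact mul_le_of_le_one_right (by positivity) (exp_le_one_iff.2 (by linarith))
  · exact Jf_gaussian_le hu hv hw

theorem bessel_J_bound_general (d : ℕ) (α : ℝ) (hα0 : 0 < α) (hαd : α < d) :
    ∃ D : ℝ, 0 < D ∧ ∀ u v : ℝ, 0 < u → 0 < v → ∀ y z : EuclideanSpace ℝ (Fin d),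
      Jf d (besselKernel d α) u v y z
        ≤ ENNReal.ofReal (D * (u + v) ^ (-((d : ℝ) - α) / 2)) := by
  set γ := (4 * π) ^ (α / 2) * Gamma (α / 2)
  have hγ : 0 < γ := by
    have := Gamma_pos_of_pos (half_pos hα0); positivity
  have hdα : 0 < (d : ℝ) - α := by linarith
  refine ⟨γ * 4 ^ (((d : ℝ) - α) / 2) * (2 / α + 2 / ((d : ℝ) - α)), by positivity,
    fun u v hu hv y z => ?_⟩
  calc Jf d (besselKernel d α) u v y z
      ≤ ENNReal.ofReal γ * ∫⁻ w in Ioi 0, ENNReal.ofReal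
          (w ^ (α / 2 - d / 2 - 1) * min 1 ((w / ((u + v) / 4)) ^ ((d : ℝ) / 2))) :=
        Jf_besselKernel_le hα0 hu hv y z
    _ = ENNReal.ofReal (γ *
          (((u + v) / 4) ^ (α / 2 - d / 2) * (1 / (α / 2) + 1 / (d / 2 - α / 2)))) := by
        rw [lintegral_rpow_mul_min_one_rpow (by positivity) (by linarith) (by positivity),
          ENNReal.ofReal_mul hγ.le]
    _ = _ := by
        rw [show α / 2 - d / 2 = -(((d : ℝ) - α) / 2) by ring,
          div_rpow (by positivity) (by norm_num), rpow_neg (by norm_num : (0 : ℝ) ≤ 4), neg_div]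
        congr 1
        field_simp

/-- For the Bessel kernel of order `α` (`0 < α < d`), there is a constant `D_{α,d} > 0` such that
`J_f(u,v,y,z) ≤ D_{α,d} (u+v)^{-(d-α)/2}` for all `u, v > 0`, `y, z ∈ ℝ^d`. -/
theorem bessel_J_bound (d : ℕ) (hd : 1 ≤ d) (α : ℝ) (hα0 : 0 < α) (hαd : α < d) :
    ∃ D : ℝ, 0 < D ∧ ∀ u v : ℝ, 0 < u → 0 < v → ∀ y z : EuclideanSpace ℝ (Fin d),
      Jf d (besselKernel d α) u v y z
        ≤ ENNReal.ofReal (D * (u + v) ^ (-((d : ℝ) - α) / 2)) :=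
  bessel_J_bound_general d α hα0 hαd
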